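/- Let S ⊆ ℕ and let 𝒫_S be the set of primes p such that for every n ∈ S, p ∣ n implies p² ∣ n. Suppose there are constants C₁, C₂ > 0 such that Σ_{p ∈ 𝒫_S, p ≤ X} log p ≥ X / C₁ holds for all real X ≥ C₂. Then every arithmetic progression {ℓ + r·g : 0 ≤ r < k} (ℓ ∈ ℤ, g, k ∈ ℕ, g ≥ 1) contained in S satisfies k ≤ 2·max{C₁·log g, C₂}. -/

import Mathlib

/-!
If `p ∈ 𝒫_S` does not divide `g`, then among any `p` consecutive terms of the progression
`ℓ + r g` one is divisible by `p`, and so is the term `p` steps later. Both lie in `S`, hence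
both are divisible by `p²`, and so is their difference `p g`: a contradiction. Thus every
`p ∈ 𝒫_S` with `2p ≤ k` divides `g`, and the density hypothesis at `X = k/2` gives
`k / (2 C₁) ≤ ∑_{p ∣ g} log p ≤ log g` as soon as `k/2 ≥ C₂`.
-/

open Real

lemma Int.exists_lt_dvd_add_mul {p : ℕ} (hp : p.Prime) {g : ℤ} (hpg : ¬ (p : ℤ) ∣ g) (ℓ : ℤ) :
    ∃ r < p, (p : ℤ) ∣ ℓ + r * g := by
  have : Fact p.Prime := ⟨hp⟩
  have hg : (g : ZMod p) ≠ 0 := by rwa [Ne, ZMod.intCast_zmod_eq_zero_iff_dvd]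
  refine ⟨((-ℓ : ZMod p) * (g : ZMod p)⁻¹).val, ZMod.val_lt _, ?_⟩
  rw [← ZMod.intCast_zmod_eq_zero_iff_dvd]
  push_cast
  rw [ZMod.natCast_val, ZMod.cast_id, mul_assoc, inv_mul_cancel₀ hg]
  ring

lemma Int.dvd_of_sq_dvd_of_sq_dvd_add_mul {p a g : ℤ} (hp : p ≠ 0) (ha : p ^ 2 ∣ a)
    (hag : p ^ 2 ∣ a + p * g) : p ∣ g := by
  have h : p * p ∣ p * g := by simpa [sq] using (dvd_add_right ha).mp hag
  exact (mul_dvd_mul_iff_left hp).mp h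

lemma Nat.Prime.dvd_of_forall_sq_dvd_of_ap_subset {S : Set ℕ} {ℓ : ℤ} {g k p : ℕ}
    (hAP : ∀ r : ℕ, r < k → ∃ n ∈ S, (n : ℤ) = ℓ + (r : ℤ) * (g : ℤ))
    (hp : p.Prime) (hpS : ∀ n ∈ S, p ∣ n → p ^ 2 ∣ n) (hk : 2 * p ≤ k) : p ∣ g := by
  by_contra hpg
  obtain ⟨r, hrp, hr⟩ := Int.exists_lt_dvd_add_mul hp (g := g) (by exact_mod_cast hpg) ℓ
  have hsq : ∀ s < k, (p : ℤ) ∣ ℓ + s * g → (p : ℤ) ^ 2 ∣ ℓ + s * g := by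
    intro s hs hdvd
    obtain ⟨n, hnS, hn⟩ := hAP s hs
    rw [← hn] at hdvd ⊢
    exact_mod_cast hpS n hnS (mod_cast hdvd)
  have hshift : ℓ + ((r + p : ℕ) : ℤ) * g = ℓ + r * g + p * g := by push_cast; ring
  have h₁ := hsq r (by omega) hr
  have h₂ := hsq (r + p) (by omega) (hshift ▸ dvd_add hr (dvd_mul_right _ _))
  rw [hshift] at h₂
  exact hpg (mod_cast Int.dvd_of_sq_dvd_of_sq_dvd_add_mul (mod_cast hp.ne_zero) h₁ h₂)

lemma sum_log_le_log_of_forall_prime_dvd {s : Finset ℕ} {n : ℕ} (hn : n ≠ 0)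
    (hs : ∀ p ∈ s, p.Prime ∧ p ∣ n) : ∑ p ∈ s, log p ≤ log n := by
  have hdvd : ∏ p ∈ s, p ∣ n :=
    Finset.prod_primes_dvd n (fun p hp => (hs p hp).1.prime) (fun p hp => (hs p hp).2)
  have hpos : 0 < ∏ p ∈ s, p := Finset.prod_pos fun p hp => (hs p hp).1.pos
  rw [← log_prod fun p hp => mod_cast (hs p hp).1.ne_zero, ← Nat.cast_prod]
  exact log_le_log (mod_cast hpos) (mod_cast Nat.le_of_dvd (Nat.pos_of_ne_zero hn) hdvd)

open scoped Classical in
theorem ap_length_bound_from_PS_density_general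
    (S : Set ℕ) (C₁ C₂ : ℝ) (hC₁ : 0 < C₁)
    (hdens : ∀ X : ℝ, C₂ ≤ X →
      X / C₁ ≤ ∑ p ∈ (Finset.range (⌊X⌋₊ + 1)).filter
        (fun p => p.Prime ∧ ∀ n ∈ S, p ∣ n → p ^ 2 ∣ n), Real.log p)
    (ℓ : ℤ) (g k : ℕ) (hg : 1 ≤ g)
    (hAP : ∀ r : ℕ, r < k → ∃ n ∈ S, (n : ℤ) = ℓ + (r : ℤ) * (g : ℤ)) :
    (k : ℝ) ≤ 2 * max (C₁ * Real.log g) C₂ := by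
  by_contra! hlt
  have hXC₂ : C₂ ≤ (k : ℝ) / 2 := by linarith [le_max_right (C₁ * log g) C₂]
  have hprimes : ∀ p ∈ (Finset.range (⌊(k : ℝ) / 2⌋₊ + 1)).filter
      (fun p => p.Prime ∧ ∀ n ∈ S, p ∣ n → p ^ 2 ∣ n), p.Prime ∧ p ∣ g := by
    intro p hp
    rw [Finset.mem_filter, Finset.mem_range, show (2 : ℝ) = (2 : ℕ) by norm_num,
      Nat.floor_div_natCast, Nat.floor_natCast] at hp
    exact ⟨hp.2.1, hp.2.1.dvd_of_forall_sq_dvd_of_ap_subset hAP hp.2.2 (by omega)⟩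
  have hlog := (hdens _ hXC₂).trans (sum_log_le_log_of_forall_prime_dvd (by omega) hprimes)
  rw [div_le_iff₀ hC₁] at hlog
  linarith [le_max_left (C₁ * log g) C₂]

open scoped Classical in
/-- If the primes `p ∈ 𝒫_S` (those such that `p ∣ n → p² ∣ n` for all `n ∈ S`) satisfy
`∑_{p ∈ 𝒫_S, p ≤ X} log p ≥ X/C₁` for all `X ≥ C₂`, then any arithmetic progression
`{ℓ + r·g : 0 ≤ r < k}` contained in `S` satisfies `k ≤ 2·max(C₁·log g, C₂)`. -/
theorem ap_length_bound_from_PS_density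
    (S : Set ℕ) (C₁ C₂ : ℝ) (hC₁ : 0 < C₁) (hC₂ : 0 < C₂)
    (hdens : ∀ X : ℝ, C₂ ≤ X →
      X / C₁ ≤ ∑ p ∈ (Finset.range (⌊X⌋₊ + 1)).filter
        (fun p => p.Prime ∧ ∀ n ∈ S, p ∣ n → p ^ 2 ∣ n), Real.log p)
    (ℓ : ℤ) (g k : ℕ) (hg : 1 ≤ g)
    (hAP : ∀ r : ℕ, r < k → ∃ n ∈ S, (n : ℤ) = ℓ + (r : ℤ) * (g : ℤ)) :
    (k : ℝ) ≤ 2 * max (C₁ * Real.log g) C₂ :=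
  ap_length_bound_from_PS_density_general S C₁ C₂ hC₁ hdens ℓ g k hg hAP
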